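/- In the multi-tier setting, suppose every device loss f_{i,j} : E → ℝ is continuous and μ_f-strongly convex with μ_f > 0, and let λ, γ > 0. Then the server objective φ(x) = (1/M) ∑_{i=1}^{M} F̃^γ_i(x) is μ̃-strongly convex with μ̃ = λγμ_f / (λμ_f + γμ_f + λγ). -/

import Mathlib

/-!
Write `g = φ - μ/2 ‖·‖²`, convex when `φ` is `μ`-strongly convex. Completing the square,
`φ θ + κ/2 ‖θ - w‖² = g θ + (κ+μ)/2 ‖θ - κ/(κ+μ) • w‖² + κμ/(κ+μ)/2 ‖w‖²`,
so the Moreau envelope of `φ` minus `κμ/(κ+μ)/2 ‖w‖²` is the partial minimisation over `θ`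
of a jointly convex function of `(θ, w)`, hence convex: the envelope is
`κμ/(κ+μ)`-strongly convex. Averaging keeps the modulus, so each team objective is
`λμ_f/(λ+μ_f)`-strongly convex, and the team envelopes are `γ·m/(γ+m)`-strongly convex with
`m = λμ_f/(λ+μ_f)`, which is `μ̃`.
-/

open Set Metric

section NormedSpace

variable {E : Type*} [NormedAddCommGroup E] [NormedSpace ℝ E]

lemma StrongConvexOn.fin_average {s : Set E} {m : ℝ} {n : ℕ} (hn : 0 < n) {f : Fin n → E → ℝ}
    (hf : ∀ i, StrongConvexOn s m (f i)) :
    StrongConvexOn s m (fun x => 1 / (n : ℝ) * ∑ i, f i x) := by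
  refine ⟨(hf ⟨0, hn⟩).1, fun x hx y hy a b ha hb hab => ?_⟩
  have hsum := Finset.sum_le_sum fun i (_ : i ∈ Finset.univ) => (hf i).2 hx hy ha hb hab
  simp only [smul_eq_mul, Finset.sum_sub_distrib, Finset.sum_add_distrib, ← Finset.mul_sum,
    Finset.sum_const, Finset.card_univ, Fintype.card_fin, nsmul_eq_mul] at hsum ⊢
  have hn' : (0 : ℝ) < n := by exact_mod_cast hn
  rw [div_mul_eq_mul_div, one_mul, div_le_iff₀ hn']
  calc _ ≤ _ := hsum
    _ = _ := by field_simp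

lemma ConvexOn.exists_sub_mul_norm_le [FiniteDimensional ℝ E] {g : E → ℝ}
    (hg : ConvexOn ℝ univ g) (v : E) : ∃ L : ℝ, ∀ θ, g v - L * ‖θ - v‖ ≤ g θ := by
  obtain ⟨K, t, ht, hK⟩ := hg.locallyLipschitz v
  obtain ⟨r, hr, hrt⟩ := Metric.mem_nhds_iff.1 ht
  refine ⟨K, fun θ => ?_⟩
  set d := ‖θ - v‖
  have hd : 0 ≤ d := norm_nonneg _
  -- convexity on `[v, θ]` carries the Lipschitz bound at the point `p` near `v` out to `θ`
  set τ := r / (r + d)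
  have hτ : 0 < τ := by positivity
  have hτ1 : 1 - τ = d / (r + d) := by simp only [τ]; field_simp; ring
  have hτd : τ * d < r := by
    rw [div_mul_eq_mul_div, div_lt_iff₀ (by positivity)]; nlinarith
  set p := (1 - τ) • v + τ • θ
  have hpv : ‖p - v‖ = τ * d := by
    rw [show p - v = τ • (θ - v) by simp only [p]; module, norm_smul, Real.norm_of_nonneg hτ.le]
  have hconv : g p ≤ (1 - τ) * g v + τ * g θ :=
    hg.2 trivial trivial (by rw [hτ1]; positivity) hτ.le (by ring)
  have hlip : g v - g p ≤ K * (τ * d) := by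
    have := hK.dist_le_mul p (hrt (by rw [mem_ball, dist_eq_norm, hpv]; exact hτd))
      v (hrt (mem_ball_self hr))
    rw [dist_eq_norm, dist_eq_norm, hpv, Real.norm_eq_abs, abs_sub_comm] at this
    exact (le_abs_self _).trans this
  nlinarith

lemma ConvexOn.bddBelow_range_add_mul_norm_sub_sq [FiniteDimensional ℝ E] {g : E → ℝ}
    (hg : ConvexOn ℝ univ g) {s : ℝ} (hs : 0 < s) (v : E) :
    BddBelow (range fun θ => g θ + s / 2 * ‖θ - v‖ ^ 2) := by
  obtain ⟨L, hL⟩ := hg.exists_sub_mul_norm_le v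
  refine ⟨g v - L ^ 2 / (2 * s), ?_⟩
  rintro _ ⟨θ, rfl⟩
  have hsq : L * ‖θ - v‖ ≤ s / 2 * ‖θ - v‖ ^ 2 + L ^ 2 / (2 * s) := by
    rw [← sub_nonneg]
    have : s / 2 * ‖θ - v‖ ^ 2 + L ^ 2 / (2 * s) - L * ‖θ - v‖
        = (s * ‖θ - v‖ - L) ^ 2 / (2 * s) := by field_simp; ring
    rw [this]; positivity
  linarith [hL θ]

lemma convexOn_mul_norm_sub_smul_sq {s : ℝ} (hs : 0 ≤ s) (c : ℝ) :
    ConvexOn ℝ univ fun p : E × E => s / 2 * ‖p.1 - c • p.2‖ ^ 2 := by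
  have hsq : ConvexOn ℝ univ fun x : E => s / 2 * ‖x‖ ^ 2 :=
    ((convexOn_norm convex_univ).pow (fun x _ => norm_nonneg x) 2).smul (by positivity)
  exact hsq.comp_linearMap (LinearMap.fst ℝ E E - c • LinearMap.snd ℝ E E)

end NormedSpace

lemma ConvexOn.ciInf_fst {F G : Type*} [AddCommGroup F] [Module ℝ F] [AddCommGroup G]
    [Module ℝ G] {φ : F × G → ℝ} (hφ : ConvexOn ℝ univ φ)
    (hbdd : ∀ w, BddBelow (range fun θ => φ (θ, w))) :
    ConvexOn ℝ univ fun w => ⨅ θ, φ (θ, w) := by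
  refine ⟨convex_univ, fun w₁ _ w₂ _ a b ha hb hab => ?_⟩
  simp only [smul_eq_mul, Real.mul_iInf_of_nonneg ha, Real.mul_iInf_of_nonneg hb]
  refine le_ciInf_add_ciInf fun θ₁ θ₂ => ?_
  calc ⨅ θ, φ (θ, a • w₁ + b • w₂) ≤ φ (a • (θ₁, w₁) + b • (θ₂, w₂)) := by
        simpa using ciInf_le (hbdd _) (a • θ₁ + b • θ₂)
    _ ≤ a * φ (θ₁, w₁) + b * φ (θ₂, w₂) := hφ.2 trivial trivial ha hb hab

section InnerProductSpace

variable {E : Type*} [NormedAddCommGroup E] [InnerProductSpace ℝ E]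

lemma mul_norm_sub_sq_add_mul_norm_sq {a b : ℝ} (hab : a + b ≠ 0) (θ w : E) :
    a / 2 * ‖θ - w‖ ^ 2 + b / 2 * ‖θ‖ ^ 2
      = (a + b) / 2 * ‖θ - (a / (a + b)) • w‖ ^ 2 + a * b / (a + b) / 2 * ‖w‖ ^ 2 := by
  rw [norm_sub_sq_real, norm_sub_sq_real, real_inner_smul_right, norm_smul, mul_pow,
    Real.norm_eq_abs, sq_abs]
  field_simp
  ring

noncomputable def moreauEnvelope (κ : ℝ) (φ : E → ℝ) (w : E) : ℝ :=
  ⨅ θ, φ θ + κ / 2 * ‖θ - w‖ ^ 2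

theorem strongConvexOn_moreauEnvelope [FiniteDimensional ℝ E] {φ : E → ℝ} {μ κ : ℝ}
    (hφ : StrongConvexOn univ μ φ) (hκμ : 0 < κ + μ) :
    StrongConvexOn univ (κ * μ / (κ + μ)) (moreauEnvelope κ φ) := by
  rw [strongConvexOn_iff_convex] at hφ ⊢
  set g : E → ℝ := fun θ => φ θ - μ / 2 * ‖θ‖ ^ 2
  set c := κ / (κ + μ)
  have hbdd (v : E) := hφ.bddBelow_range_add_mul_norm_sub_sq hκμ v
  have hsplit (w : E) : moreauEnvelope κ φ w - κ * μ / (κ + μ) / 2 * ‖w‖ ^ 2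
      = ⨅ θ, g θ + (κ + μ) / 2 * ‖θ - c • w‖ ^ 2 := by
    rw [moreauEnvelope, sub_eq_iff_eq_add, ciInf_add (hbdd _)]
    congr 1 with θ
    rw [add_assoc, ← mul_norm_sub_sq_add_mul_norm_sq hκμ.ne']
    simp only [g]; ring
  simp only [hsplit]
  exact ConvexOn.ciInf_fst ((hφ.comp_linearMap (LinearMap.fst ℝ E E)).add
    (convexOn_mul_norm_sub_smul_sq hκμ.le c)) fun w => hbdd (c • w)

end InnerProductSpace

theorem server_objective_strongly_convex_general
    {E : Type*} [NormedAddCommGroup E] [InnerProductSpace ℝ E] [FiniteDimensional ℝ E]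
    {M : ℕ} (hM : 1 ≤ M) {N : Fin M → ℕ} (hN : ∀ i, 1 ≤ N i)
    (f : (i : Fin M) → Fin (N i) → E → ℝ)
    (μf lam gam : ℝ) (hμf : 0 < μf) (hlam : 0 < lam) (hgam : 0 < gam)
    (hsc : ∀ i j, ConvexOn ℝ Set.univ (fun x : E => f i j x - μf / 2 * ‖x‖ ^ 2)) :
    ConvexOn ℝ Set.univ (fun x : E =>
      (1 / (M : ℝ)) * ∑ i : Fin M,
        (⨅ w : E,
          (((1 / (N i : ℝ)) * ∑ j : Fin (N i), ⨅ θ : E, (f i j θ + lam / 2 * ‖θ - w‖ ^ 2))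
            + gam / 2 * ‖w - x‖ ^ 2))
      - (lam * gam * μf / (lam * μf + gam * μf + lam * gam)) / 2 * ‖x‖ ^ 2) := by
  have hteam (i : Fin M) : StrongConvexOn univ (lam * μf / (lam + μf))
      fun w => 1 / (N i : ℝ) * ∑ j, moreauEnvelope lam (f i j) w :=
    .fin_average (hN i) fun j =>
      strongConvexOn_moreauEnvelope (strongConvexOn_iff_convex.2 (hsc i j)) (by positivity)
  have hserver := StrongConvexOn.fin_average hM fun i =>
    strongConvexOn_moreauEnvelope (κ := gam) (hteam i) (by positivity)
  have hmod : gam * (lam * μf / (lam + μf)) / (gam + lam * μf / (lam + μf))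
      = lam * gam * μf / (lam * μf + gam * μf + lam * gam) := by
    field_simp; ring
  rw [hmod] at hserver
  exact strongConvexOn_iff_convex.1 hserver

/-- **Strong convexity of the server objective.**
In the multi-tier setting with device losses `f i j : E → ℝ` (`M ≥ 1` teams,
team `i` having `N i ≥ 1` devices) that are continuous and `μ_f`-strongly convex,
and parameters `λ, γ > 0`, the server objective
`φ(x) = (1/M) ∑ᵢ F̃ᵢ^γ(x)`, where
`F̃ᵢ^γ(x) = ⨅ w, (Fᵢ(w) + (γ/2)‖w − x‖²)`,
`Fᵢ(w) = (1/Nᵢ) ∑ⱼ ⨅ θ, (f i j θ + (λ/2)‖θ − w‖²)`,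
is `μ̃`-strongly convex with `μ̃ = λγμ_f/(λμ_f + γμ_f + λγ)`. -/
theorem server_objective_strongly_convex
    {E : Type*} [NormedAddCommGroup E] [InnerProductSpace ℝ E] [FiniteDimensional ℝ E]
    {M : ℕ} (hM : 1 ≤ M) {N : Fin M → ℕ} (hN : ∀ i, 1 ≤ N i)
    (f : (i : Fin M) → Fin (N i) → E → ℝ)
    (μf lam gam : ℝ) (hμf : 0 < μf) (hlam : 0 < lam) (hgam : 0 < gam)
    (hcont : ∀ i j, Continuous (f i j))
    (hsc : ∀ i j, ConvexOn ℝ Set.univ (fun x : E => f i j x - μf / 2 * ‖x‖ ^ 2)) :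
    ConvexOn ℝ Set.univ (fun x : E =>
      (1 / (M : ℝ)) * ∑ i : Fin M,
        (⨅ w : E,
          (((1 / (N i : ℝ)) * ∑ j : Fin (N i), ⨅ θ : E, (f i j θ + lam / 2 * ‖θ - w‖ ^ 2))
            + gam / 2 * ‖w - x‖ ^ 2))
      - (lam * gam * μf / (lam * μf + gam * μf + lam * gam)) / 2 * ‖x‖ ^ 2) :=
  server_objective_strongly_convex_general hM hN f μf lam gam hμf hlam hgam hsc
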